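/- Let G9 be the interlacement graph of the matching L9 = { {0,5}, {1,8}, {2,9}, {3,14}, {4,15}, {6,13}, {7,12}, {10,17}, {11,16} } of {0,...,17}, with vertex set {0,...,8} where vertex i corresponds to the i-th chord in the listed order and vertices i, j are adjacent if and only if the corresponding chords are interlaced. Then there is no subset A of the vertices of G9 such that for all distinct vertices u and v the following are equivalent: (i) u and v have an odd number of common neighbours; (ii) u and v are adjacent and either both u and v are in A or neither is in A. That is, G9 fails Rosenstiehl's second condition. -/

import Mathlib

/-- Two sorted pairs (chords) are interlaced. -/
def Interlaced (p q : ℕ × ℕ) : Prop :=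
  (p.1 < q.1 ∧ q.1 < p.2 ∧ p.2 < q.2) ∨ (q.1 < p.1 ∧ p.1 < q.2 ∧ q.2 < p.2)

/-- Interlacement graph of a tuple of chords: vertex `i` corresponds to the `i`-th chord,
and two vertices are adjacent iff the corresponding chords are interlaced. -/
def interGraph {n : ℕ} (c : Fin n → ℕ × ℕ) : SimpleGraph (Fin n) where
  Adj i j := i ≠ j ∧ Interlaced (c i) (c j)
  symm := ⟨fun _ _ h => ⟨h.1.symm, Or.symm h.2⟩⟩
  loopless := ⟨fun _ h => h.1 rfl⟩

/-- The chords of the matching `L9 = {{0,5},{1,8},{2,9},{3,14},{4,15},{6,13},{7,12},{10,17},{11,16}}`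
of `{0, ..., 17}`, in the listed order. -/
def L9chords : Fin 9 → ℕ × ℕ :=
  ![(0, 5), (1, 8), (2, 9), (3, 14), (4, 15), (6, 13), (7, 12), (10, 17), (11, 16)]

/-- The interlacement graph of the matching `L9`. -/
def G9 : SimpleGraph (Fin 9) := interGraph L9chords

/-!
If `A` witnesses Rosenstiehl's second condition, then for every edge `uv` the vertices `u`, `v`
lie on the same side of `A` exactly when they have an odd number of common neighbours. Going
around a cycle one returns to the starting side, so every cycle has an even number of edges
whose ends have an even number of common neighbours. The 4-cycle `1 – 5 – 7 – 4 – 1` of `G9`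
has exactly one such edge: `5` and `7` have no common neighbour, while the other three edges
have the common neighbours `{2}`, `{3}` and `{0, 2, 3}`.
-/

instance (p q : ℕ × ℕ) : Decidable (Interlaced p q) :=
  inferInstanceAs (Decidable (_ ∨ _))

instance {n : ℕ} (c : Fin n → ℕ × ℕ) : DecidableRel (interGraph c).Adj :=
  fun i j => inferInstanceAs (Decidable (i ≠ j ∧ _))

instance : DecidableRel G9.Adj :=
  inferInstanceAs (DecidableRel (interGraph L9chords).Adj)

namespace SimpleGraph

variable {V : Type*} (G : SimpleGraph V)

def RosenstiehlSecond (A : Set V) : Prop :=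
  ∀ u v, u ≠ v → (Odd (G.commonNeighbors u v).ncard ↔
    G.Adj u v ∧ ((u ∈ A ∧ v ∈ A) ∨ (u ∉ A ∧ v ∉ A)))

theorem ncard_commonNeighbors [Fintype V] [DecidableRel G.Adj] (u v : V) :
    (G.commonNeighbors u v).ncard = (Finset.univ.filter fun w => G.Adj u w ∧ G.Adj v w).card := by
  rw [← Set.ncard_coe_finset]
  congr 1
  ext w
  simp [mem_commonNeighbors]

variable {G} {A : Set V}

theorem RosenstiehlSecond.mem_iff_mem_iff_odd (hA : G.RosenstiehlSecond A) {u v : V}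
    (h : G.Adj u v) : (u ∈ A ↔ v ∈ A) ↔ Odd (G.commonNeighbors u v).ncard := by
  rw [hA u v h.ne]
  tauto

theorem RosenstiehlSecond.mem_iff_mem_iff_even_countP (hA : G.RosenstiehlSecond A) {u v : V}
    (p : G.Walk u v) : (u ∈ A ↔ v ∈ A) ↔
      Even (p.darts.countP fun d => Even (G.commonNeighbors d.fst d.snd).ncard) := by
  induction p with
  | nil => simp
  | @cons x y z h p ih =>
    have hstep := hA.mem_iff_mem_iff_odd h
    rw [← Nat.not_even_iff_odd] at hstep
    rw [Walk.darts_cons, List.countP_cons]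
    by_cases he : Even (G.commonNeighbors x y).ncard
    · simp only [he, decide_true, if_true, Nat.even_add_one, ← ih]
      tauto
    · simp only [he, decide_false, Bool.false_eq_true, if_false, add_zero, ← ih]
      tauto

theorem RosenstiehlSecond.even_countP_of_closed (hA : G.RosenstiehlSecond A) {u : V}
    (p : G.Walk u u) :
    Even (p.darts.countP fun d => Even (G.commonNeighbors d.fst d.snd).ncard) :=
  (hA.mem_iff_mem_iff_even_countP p).mp Iff.rfl

end SimpleGraph

open SimpleGraph

/-- The interlacement graph `G9` of the matching `L9` fails Rosenstiehl's second
condition: there is no subset `A` of the vertices such that for all distinct vertices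
`u`, `v`: `u` and `v` have an odd number of common neighbours iff `u` and `v` are
adjacent and either both lie in `A` or neither does. -/
theorem G9_not_rosenstiehl :
    ¬ ∃ A : Set (Fin 9), ∀ u v : Fin 9, u ≠ v →
      (Odd {w | G9.Adj u w ∧ G9.Adj v w}.ncard ↔
        (G9.Adj u v ∧ ((u ∈ A ∧ v ∈ A) ∨ (u ∉ A ∧ v ∉ A)))) := by
  rintro ⟨A, hA⟩
  replace hA : G9.RosenstiehlSecond A := hA
  let cycle : G9.Walk 1 1 :=
    .cons (by decide : G9.Adj 1 5) <| .cons (by decide : G9.Adj 5 7) <|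
      .cons (by decide : G9.Adj 7 4) <| .cons (by decide : G9.Adj 4 1) .nil
  have hcount :
      cycle.darts.countP (fun d => Even (G9.commonNeighbors d.fst d.snd).ncard) = 1 := by
    simp only [cycle, Walk.darts_cons, Walk.darts_nil, List.countP_cons, List.countP_nil,
      ncard_commonNeighbors]
    decide
  exact Nat.not_even_one (hcount ▸ hA.even_countP_of_closed cycle)
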